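/- In the mixed Deffuant model, assume inf_{t≥0} μ(t) > 0. Then almost surely, for every δ > 0 there exists a time t ≥ 0 such that for all s ≥ t, every pair {i,j} ∈ E(s) ∩ 𝓔(s) satisfies ‖x_i(s) − x_j(s)‖ ≤ δ. -/

import Mathlib

open MeasureTheory ProbabilityTheory Filter
open scoped ENNReal

open scoped Classical in
/-- One step of the mixed Deffuant model: given confidence threshold `ε`, convergence
parameter `μt`, social edge set `Et` and selected (unordered) pair `p`, each endpoint of `p`
moves toward the other at rate `μt` provided `p` is a social edge and the two opinions are
within distance `ε`; all other agents keep their opinion. -/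
noncomputable def deffuantStep {V W : Type*} [NormedAddCommGroup W] [NormedSpace ℝ W]
    (ε μt : ℝ) (Et : Set (Sym2 V)) (p : Sym2 V) (x : V → W) : V → W :=
  fun k =>
    if h : k ∈ p then
      if p ∈ Et ∧ ‖x k - x (Sym2.Mem.other h)‖ ≤ ε then
        x k + μt • (x (Sym2.Mem.other h) - x k)
      else x k
    else x k

/-- The trajectory of the mixed Deffuant model with confidence threshold `ε`, convergence
parameters `μ`, social edge sets `E`, selected pairs `e` and initial opinions `x0`. -/
noncomputable def deffuantTraj {V W : Type*} [NormedAddCommGroup W] [NormedSpace ℝ W]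
    (ε : ℝ) (μ : ℕ → ℝ) (E : ℕ → Set (Sym2 V)) (e : ℕ → Sym2 V) (x0 : V → W) :
    ℕ → V → W
  | 0 => x0
  | t + 1 => deffuantStep ε (μ t) (E t) (e t) (deffuantTraj ε μ E e x0 t)

/-! The energy `∑ k, ‖x k‖ ^ 2` never increases, and it drops by `2μ(1 - μ)‖x i - x j‖² ≥
(⨅ t, μ t) q²` whenever the pair `{i, j}` is selected while it is a profile edge of length `> q`;
so along every trajectory this happens only finitely often. Being such an edge at time `t + 1`
is determined by the first `t + 1` selections, while the selection at time `t + 1` is independent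
of them and picks `{i, j}` with probability bounded below. By Lévy's conditional Borel–Cantelli
lemma, a pair that is a long profile edge infinitely often is then almost surely selected at
such times infinitely often. Hence almost surely every pair is a long profile edge only finitely
often, and a countable union over pairs and `q = 1 / (n + 1)` gives the theorem. -/

theorem Nat.tendsto_count_atTop {p : ℕ → Prop} [DecidablePred p] (hp : {n | p n}.Infinite) :
    Tendsto (Nat.count p) atTop atTop :=
  (Nat.count_monotone p).tendsto_atTop_atTop fun b =>
    ⟨Nat.nth p b, (Nat.count_nth_of_infinite hp b).ge⟩

theorem Set.Finite.of_antitone_of_drop {f : ℕ → ℝ} {s : Set ℕ} {c : ℝ} (hc : 0 < c)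
    (hf0 : ∀ n, 0 ≤ f n) (hf : Antitone f) (hdrop : ∀ n ∈ s, f (n + 1) ≤ f n - c) :
    s.Finite := by
  classical
  have hcount : ∀ n, f n + c * Nat.count (· ∈ s) n ≤ f 0 := by
    intro n
    induction n with
    | zero => simp
    | succ n ih =>
      rw [Nat.count_succ]
      split_ifs with hn
      · push_cast
        linarith [hdrop n hn]
      · rw [add_zero]
        linarith [hf n.le_succ]
  by_contra hs
  obtain ⟨n, hn⟩ := ((tendsto_natCast_atTop_atTop.comp
    (Nat.tendsto_count_atTop (p := (· ∈ s)) hs)).eventually_gt_atTop (f 0 / c)).exists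
  rw [Function.comp_apply, div_lt_iff₀ hc] at hn
  linarith [hcount n, hf0 n]

section Step

variable {V W : Type*} [NormedAddCommGroup W] [NormedSpace ℝ W]
  {ε μt : ℝ} {Et : Set (Sym2 V)} {x : V → W} {i j k : V}

theorem deffuantStep_of_notMem {p : Sym2 V} (h : k ∉ p) :
    deffuantStep ε μt Et p x k = x k := by
  simp [deffuantStep, h]

open scoped Classical in
theorem deffuantStep_mk_apply_left :
    deffuantStep ε μt Et s(i, j) x i =
      if s(i, j) ∈ Et ∧ ‖x i - x j‖ ≤ ε then x i + μt • (x j - x i) else x i := by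
  have hi : i ∈ s(i, j) := Sym2.mem_mk_left i j
  have hother : Sym2.Mem.other hi = j := Sym2.congr_right.mp (Sym2.other_spec hi)
  unfold deffuantStep
  rw [dif_pos hi, hother]

open scoped Classical in
theorem deffuantStep_mk_apply_right :
    deffuantStep ε μt Et s(i, j) x j =
      if s(i, j) ∈ Et ∧ ‖x i - x j‖ ≤ ε then x j + μt • (x i - x j) else x j := by
  rw [Sym2.eq_swap, deffuantStep_mk_apply_left, norm_sub_rev]

theorem deffuantStep_of_not_active (h : ¬ (s(i, j) ∈ Et ∧ ‖x i - x j‖ ≤ ε)) :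
    deffuantStep ε μt Et s(i, j) x = x := by
  funext k
  by_cases hki : k = i
  · rw [hki, deffuantStep_mk_apply_left, if_neg h]
  by_cases hkj : k = j
  · rw [hkj, deffuantStep_mk_apply_right, if_neg h]
  exact deffuantStep_of_notMem (by simp [hki, hkj])

theorem deffuantStep_diag : deffuantStep ε μt Et s(i, i) x = x := by
  by_cases h : s(i, i) ∈ Et ∧ ‖x i - x i‖ ≤ ε
  · funext k
    by_cases hk : k = i
    · subst hk
      simp [deffuantStep_mk_apply_left, h]
    · exact deffuantStep_of_notMem (by simpa using hk)
  · exact deffuantStep_of_not_active h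

theorem deffuantTraj_congr {μ : ℕ → ℝ} {E : ℕ → Set (Sym2 V)} {e e' : ℕ → Sym2 V}
    {x0 : V → W} {t : ℕ} (h : ∀ u < t, e u = e' u) :
    deffuantTraj ε μ E e x0 t = deffuantTraj ε μ E e' x0 t := by
  induction t with
  | zero => rfl
  | succ t ih =>
    simp only [deffuantTraj, h t t.lt_succ_self, ih fun u hu => h u (hu.trans t.lt_succ_self)]

end Step

section Energy

variable {V F : Type*} [Fintype V] [NormedAddCommGroup F] [InnerProductSpace ℝ F]

theorem norm_sq_add_norm_sq_of_compromise (a b : F) (c : ℝ) :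
    ‖a + c • (b - a)‖ ^ 2 + ‖b + c • (a - b)‖ ^ 2
      = ‖a‖ ^ 2 + ‖b‖ ^ 2 - 2 * c * (1 - c) * ‖a - b‖ ^ 2 := by
  simp only [← real_inner_self_eq_norm_sq, inner_add_left, inner_add_right, inner_smul_left,
    inner_smul_right, inner_sub_left, inner_sub_right, real_inner_comm a b, RCLike.conj_to_real]
  ring

theorem sum_norm_sq_deffuantStep_of_active {ε μt : ℝ} {Et : Set (Sym2 V)} {x : V → F}
    {i j : V} (hij : i ≠ j) (h : s(i, j) ∈ Et ∧ ‖x i - x j‖ ≤ ε) :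
    ∑ k, ‖deffuantStep ε μt Et s(i, j) x k‖ ^ 2
      = ∑ k, ‖x k‖ ^ 2 - 2 * μt * (1 - μt) * ‖x i - x j‖ ^ 2 := by
  have hchange : ∑ k, (‖deffuantStep ε μt Et s(i, j) x k‖ ^ 2 - ‖x k‖ ^ 2)
      = (‖x i + μt • (x j - x i)‖ ^ 2 - ‖x i‖ ^ 2)
        + (‖x j + μt • (x i - x j)‖ ^ 2 - ‖x j‖ ^ 2) := by
    rw [Fintype.sum_eq_add i j hij fun k hk => ?_, deffuantStep_mk_apply_left, if_pos h,
      deffuantStep_mk_apply_right, if_pos h]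
    rw [deffuantStep_of_notMem (by simpa [Sym2.mem_iff] using hk), sub_self]
  rw [Finset.sum_sub_distrib] at hchange
  linarith [norm_sq_add_norm_sq_of_compromise (x i) (x j) μt]

theorem sum_norm_sq_deffuantStep_le {ε μt : ℝ} (hμt : μt ∈ Set.Icc (0 : ℝ) (1 / 2))
    (Et : Set (Sym2 V)) (p : Sym2 V) (x : V → F) :
    ∑ k, ‖deffuantStep ε μt Et p x k‖ ^ 2 ≤ ∑ k, ‖x k‖ ^ 2 := by
  induction p using Sym2.inductionOn with
  | hf i j =>
    rcases eq_or_ne i j with rfl | hij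
    · rw [deffuantStep_diag]
    by_cases h : s(i, j) ∈ Et ∧ ‖x i - x j‖ ≤ ε
    · rw [sum_norm_sq_deffuantStep_of_active hij h]
      have : 0 ≤ 2 * μt * (1 - μt) := by nlinarith [hμt.1, hμt.2]
      nlinarith [sq_nonneg ‖x i - x j‖]
    · rw [deffuantStep_of_not_active h]

theorem finite_setOf_long_interactions {ε q : ℝ} (hq : 0 < q) {μ : ℕ → ℝ}
    (hμ : ∀ t, μ t ∈ Set.Icc (0 : ℝ) (1 / 2)) (hinf : 0 < ⨅ t, μ t)
    (E : ℕ → Set (Sym2 V)) (e : ℕ → Sym2 V) (x0 : V → F) {i j : V} (hij : i ≠ j) :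
    {t | e t = s(i, j) ∧ s(i, j) ∈ E t ∧
      q < ‖deffuantTraj ε μ E e x0 t i - deffuantTraj ε μ E e x0 t j‖ ∧
      ‖deffuantTraj ε μ E e x0 t i - deffuantTraj ε μ E e x0 t j‖ ≤ ε}.Finite := by
  set x := deffuantTraj ε μ E e x0
  have hμinf : ∀ t, (⨅ t, μ t) ≤ μ t :=
    ciInf_le ⟨0, Set.forall_mem_range.2 fun t => (hμ t).1⟩
  refine Set.Finite.of_antitone_of_drop (f := fun t => ∑ k, ‖x t k‖ ^ 2)
    (c := (⨅ t, μ t) * q ^ 2) (by positivity) (fun t => by positivity)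
    (antitone_nat_of_succ_le fun t => sum_norm_sq_deffuantStep_le (hμ t) _ _ _) ?_
  rintro t ⟨het, hE, hlong, hclose⟩
  have hstep : x (t + 1) = deffuantStep ε (μ t) (E t) s(i, j) (x t) := by
    rw [← het]
    rfl
  simp only [hstep, sum_norm_sq_deffuantStep_of_active hij ⟨hE, hclose⟩]
  have hrate : (⨅ t, μ t) ≤ 2 * μ t * (1 - μ t) := by
    nlinarith [hμinf t, (hμ t).1, (hμ t).2]
  have hlen : q ^ 2 ≤ ‖x t i - x t j‖ ^ 2 := pow_le_pow_left₀ hq.le hlong.le 2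
  nlinarith [mul_le_mul hrate hlen (sq_nonneg q) (by nlinarith [(hμ t).1, (hμ t).2])]

end Energy

section ConditionalBorelCantelli

variable {Ω : Type*} {m₀ : MeasurableSpace Ω} {P : Measure Ω} [IsProbabilityMeasure P]

theorem condExp_indicator_inter_ae_eq_of_indep {m : MeasurableSpace Ω} (hm : m ≤ m₀)
    {A B : Set Ω} (hA : MeasurableSet[m] A) (hB : MeasurableSet[m₀] B)
    (hindep : Indep (MeasurableSpace.generateFrom {B}) m P) :
    P[(A ∩ B).indicator 1 | m] =ᵐ[P] A.indicator fun _ => P.real B := by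
  have hBle : MeasurableSpace.generateFrom {B} ≤ m₀ :=
    MeasurableSpace.generateFrom_le fun _ hs => hs ▸ hB
  have hBsm : StronglyMeasurable[MeasurableSpace.generateFrom {B}] (B.indicator (1 : Ω → ℝ)) :=
    stronglyMeasurable_const.indicator (MeasurableSpace.measurableSet_generateFrom rfl)
  have hABint : Integrable (A.indicator (1 : Ω → ℝ) * B.indicator 1) P := by
    rw [← Set.inter_indicator_one]
    exact (integrable_const 1).indicator ((hm _ hA).inter hB)
  calc P[(A ∩ B).indicator 1 | m] = P[A.indicator 1 * B.indicator 1 | m] := by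
        rw [Set.inter_indicator_one]
    _ =ᵐ[P] A.indicator 1 * P[B.indicator 1 | m] :=
        condExp_mul_of_stronglyMeasurable_left (stronglyMeasurable_const.indicator hA) hABint
          ((integrable_const 1).indicator hB)
    _ =ᵐ[P] A.indicator 1 * fun _ => P[B.indicator 1] :=
        (condExp_indep_eq hBle hm hBsm hindep).mul_left
    _ = A.indicator fun _ => P.real B := by
        funext ω
        by_cases hω : ω ∈ A <;> simp [integral_indicator_one hB, hω]

theorem ae_frequently_inter_of_frequently {ℱ : Filtration ℕ m₀} {A B : ℕ → Set Ω}
    {c : ℝ} (hc : 0 < c) (hA0 : MeasurableSet[ℱ 0] (A 0))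
    (hA : ∀ n, MeasurableSet[ℱ n] (A (n + 1))) (hB : ∀ n, MeasurableSet[ℱ n] (B n))
    (hindep : ∀ n, Indep (MeasurableSpace.generateFrom {B (n + 1)}) (ℱ n) P)
    (hPB : ∀ n, c ≤ P.real (B (n + 1))) :
    ∀ᵐ ω ∂P, (∃ᶠ n in atTop, ω ∈ A n) → ∃ᶠ n in atTop, ω ∈ A n ∩ B n := by
  classical
  have hAB : ∀ n, MeasurableSet[ℱ n] (A n ∩ B n)
    | 0 => hA0.inter (hB 0)
    | n + 1 => (ℱ.mono n.le_succ _ (hA n)).inter (hB (n + 1))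
  have hcond : ∀ᵐ ω ∂P, ∀ n, P[(A (n + 1) ∩ B (n + 1)).indicator 1 | ℱ n] ω
      = (A (n + 1)).indicator (fun _ => P.real (B (n + 1))) ω :=
    ae_all_iff.2 fun n => condExp_indicator_inter_ae_eq_of_indep (ℱ.le n) (hA n)
      (ℱ.le _ _ (hB (n + 1))) (hindep n)
  filter_upwards [ae_mem_limsup_atTop_iff P hAB, hcond] with ω hlevy hω hfreq
  rw [← mem_limsup_iff_frequently_mem]
  refine hlevy.2 ?_
  simp only [hω]
  have hfreq' : {n | ω ∈ A (n + 1)}.Infinite := by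
    refine Nat.frequently_atTop_iff_infinite.1
      (frequently_map (P := fun n => ω ∈ A n) (m := (· + 1)) |>.1 ?_)
    rwa [map_add_atTop_eq_nat 1]
  refine tendsto_atTop_mono (fun n => ?_)
    ((tendsto_natCast_atTop_atTop.comp (Nat.tendsto_count_atTop hfreq')).const_mul_atTop hc)
  calc c * (Nat.count (fun k => ω ∈ A (k + 1)) n : ℝ)
      = ∑ k ∈ Finset.range n, (A (k + 1)).indicator (fun _ => c) ω := by
        rw [Nat.count_eq_card_filter_range, Finset.card_filter, Nat.cast_sum, Finset.mul_sum]
        refine Finset.sum_congr rfl fun k _ => ?_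
        by_cases hk : ω ∈ A (k + 1) <;> simp [hk]
    _ ≤ ∑ k ∈ Finset.range n, (A (k + 1)).indicator (fun _ => P.real (B (k + 1))) ω :=
        Finset.sum_le_sum fun k _ => Set.indicator_le_indicator (hPB k)

end ConditionalBorelCantelli

section SelectionFiltration

variable {Ω β : Type*} {m₀ : MeasurableSpace Ω} [MeasurableSpace β]
  [DiscreteMeasurableSpace β] [Countable β] {e : ℕ → Ω → β}

def firstSelections (e : ℕ → Ω → β) (k : ℕ) (ω : Ω) : Finset.range (k + 1) → β :=
  fun u => e u ω

def selectionFiltration (he : ∀ t, Measurable (e t)) : Filtration ℕ m₀ where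
  seq k := MeasurableSpace.comap (firstSelections e k) inferInstance
  mono' k l hkl := by
    have hrestrict : firstSelections e k = (fun v (u : Finset.range (k + 1)) =>
        v ⟨u, Finset.mem_range.2 ((Finset.mem_range.1 u.2).trans_le (by omega))⟩) ∘
          firstSelections e l := rfl
    dsimp only
    rw [hrestrict, ← MeasurableSpace.comap_comp]
    exact MeasurableSpace.comap_mono Measurable.of_discrete.comap_le
  le' k := (measurable_pi_lambda (firstSelections e k) fun u => he u).comap_le

theorem measurableSet_selectionFiltration (he : ∀ t, Measurable (e t)) {k : ℕ} {s : Set Ω}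
    (hs : ∀ ω ω', (∀ u ≤ k, e u ω = e u ω') → ω ∈ s → ω' ∈ s) :
    MeasurableSet[selectionFiltration he k] s := by
  refine ⟨firstSelections e k '' s, .of_discrete, Set.ext fun ω => ⟨?_, fun hω => ⟨ω, hω, rfl⟩⟩⟩
  rintro ⟨ω', hω', hsel⟩
  refine hs ω' ω (fun u hu => ?_) hω'
  exact congrFun hsel ⟨u, Finset.mem_range.2 (Nat.lt_succ_of_le hu)⟩

theorem indep_selectionFiltration {P : Measure Ω} (he : ∀ t, Measurable (e t))
    (hindep : iIndepFun e P) (k : ℕ) (S : Set β) :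
    Indep (MeasurableSpace.generateFrom {e (k + 1) ⁻¹' S}) (selectionFiltration he k) P := by
  have h := hindep.indepFun_finset {k + 1} (Finset.range (k + 1)) (by simp) he
  rw [IndepFun_iff_Indep] at h
  refine indep_of_indep_of_le_left h (MeasurableSpace.generateFrom_le ?_)
  rintro _ rfl
  exact ⟨{v | v ⟨k + 1, Finset.mem_singleton_self _⟩ ∈ S}, .of_discrete, rfl⟩

end SelectionFiltration

theorem ae_eventually_profile_edge_le {Ω V F : Type*} [Fintype V] [NormedAddCommGroup F]
    [InnerProductSpace ℝ F] [MeasurableSpace (Sym2 V)] [DiscreteMeasurableSpace (Sym2 V)]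
    {m₀ : MeasurableSpace Ω} {P : Measure Ω} [IsProbabilityMeasure P]
    {e : ℕ → Ω → Sym2 V} (he : ∀ t, Measurable (e t)) (hindep : iIndepFun e P)
    {i j : V} (hij : i ≠ j) {c : ℝ} (hc : 0 < c) (hsel : ∀ t, c ≤ P.real {ω | e t ω = s(i, j)})
    {ε q : ℝ} (hq : 0 < q)
    {μ : ℕ → ℝ} (hμ : ∀ t, μ t ∈ Set.Icc (0 : ℝ) (1 / 2)) (hinf : 0 < ⨅ t, μ t)
    (E : ℕ → Set (Sym2 V)) (x0 : V → F) :
    ∀ᵐ ω ∂P, ∀ᶠ s in atTop, s(i, j) ∈ E s →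
      ‖deffuantTraj ε μ E (fun u => e u ω) x0 s i
          - deffuantTraj ε μ E (fun u => e u ω) x0 s j‖ ≤ ε →
      ‖deffuantTraj ε μ E (fun u => e u ω) x0 s i
          - deffuantTraj ε μ E (fun u => e u ω) x0 s j‖ ≤ q := by
  set X := fun t ω => deffuantTraj ε μ E (fun u => e u ω) x0 t
  set A : ℕ → Set Ω := fun t =>
    {ω | s(i, j) ∈ E t ∧ q < ‖X t ω i - X t ω j‖ ∧ ‖X t ω i - X t ω j‖ ≤ ε}
  set B : ℕ → Set Ω := fun t => e t ⁻¹' {s(i, j)}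
  have hA : ∀ k t, t ≤ k + 1 → MeasurableSet[selectionFiltration he k] (A t) :=
    fun k t ht => measurableSet_selectionFiltration he fun ω ω' hωω' hω => by
      have hX : X t ω' = X t ω := deffuantTraj_congr fun u hu => (hωω' u (by omega)).symm
      simpa [A, hX] using hω
  have hB : ∀ n, MeasurableSet[selectionFiltration he n] (B n) :=
    fun n => measurableSet_selectionFiltration he fun ω ω' hωω' hω =>
      (hωω' n le_rfl).symm.trans hω
  filter_upwards [ae_frequently_inter_of_frequently hc (hA 0 0 (by omega))
    (fun n => hA n (n + 1) le_rfl) hB (fun n => indep_selectionFiltration he hindep n _)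
    (fun n => hsel (n + 1))] with ω hω
  have hfinite := finite_setOf_long_interactions (ε := ε) hq hμ hinf E (fun u => e u ω) x0 hij
  have hrare : ¬ ∃ᶠ t in atTop, ω ∈ A t ∩ B t := fun h =>
    Nat.frequently_atTop_iff_infinite.1 h <|
      hfinite.subset fun t ⟨⟨hE, hlong, hclose⟩, het⟩ => ⟨het, hE, hlong, hclose⟩
  filter_upwards [not_frequently.1 (mt hω hrare)] with s hs hE hclose
  by_contra! hlong
  exact hs ⟨hE, hlong, hclose⟩

theorem deffuant_profile_edges_eventually_short_general
    {d : ℕ} {V : Type*} [Fintype V]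
    {Ω : Type*} [MeasurableSpace Ω] (P : Measure Ω) [IsProbabilityMeasure P]
    (e : ℕ → Ω → Sym2 V)
    (hmeas : ∀ t, @Measurable Ω (Sym2 V) _ ⊤ (e t))
    (hindep : iIndepFun (m := fun _ : ℕ => (⊤ : MeasurableSpace (Sym2 V))) e P)
    (hunif : ∀ t, ∀ p : Sym2 V, ¬ p.IsDiag →
      P {ω | e t ω = p} = ((Nat.card {q : Sym2 V // ¬ q.IsDiag} : ℝ≥0∞))⁻¹)
    (ε : ℝ)
    (μ : ℕ → ℝ) (hμ : ∀ t, μ t ∈ Set.Icc (0 : ℝ) (1 / 2))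
    (hinf : 0 < ⨅ t, μ t)
    (E : ℕ → Set (Sym2 V))
    (x0 : V → EuclideanSpace ℝ (Fin d)) :
    ∀ᵐ ω ∂P, ∀ δ : ℝ, 0 < δ → ∃ t : ℕ, ∀ s, t ≤ s → ∀ i j : V, s(i, j) ∈ E s →
      ‖deffuantTraj ε μ E (fun u => e u ω) x0 s i
          - deffuantTraj ε μ E (fun u => e u ω) x0 s j‖ ≤ ε →
      ‖deffuantTraj ε μ E (fun u => e u ω) x0 s i
          - deffuantTraj ε μ E (fun u => e u ω) x0 s j‖ ≤ δ := by
  let _ : MeasurableSpace (Sym2 V) := ⊤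
  have hshort : ∀ (n : ℕ) (i j : V), ∀ᵐ ω ∂P, ∀ᶠ s in atTop, s(i, j) ∈ E s →
      ‖deffuantTraj ε μ E (fun u => e u ω) x0 s i
          - deffuantTraj ε μ E (fun u => e u ω) x0 s j‖ ≤ ε →
      ‖deffuantTraj ε μ E (fun u => e u ω) x0 s i
          - deffuantTraj ε μ E (fun u => e u ω) x0 s j‖ ≤ 1 / (n + 1) := by
    intro n i j
    rcases eq_or_ne i j with rfl | hij
    · exact ae_of_all _ fun ω => .of_forall fun s _ _ => by simp [n.cast_add_one_pos.le]
    have hdiag : ¬ s(i, j).IsDiag := by simpa using hij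
    have hpairs : 0 < Nat.card {q : Sym2 V // ¬ q.IsDiag} :=
      Nat.card_pos_iff.2 ⟨⟨⟨_, hdiag⟩⟩, inferInstance⟩
    refine ae_eventually_profile_edge_le hmeas hindep hij (inv_pos.2 (Nat.cast_pos.2 hpairs))
      (fun t => ?_) Nat.one_div_pos_of_nat hμ hinf E x0
    rw [measureReal_def, hunif t _ hdiag, ENNReal.toReal_inv, ENNReal.toReal_natCast]
  filter_upwards [ae_all_iff.2 fun n => ae_all_iff.2 fun i => ae_all_iff.2 (hshort n i)]
    with ω hω δ hδ
  obtain ⟨n, hn⟩ := exists_nat_one_div_lt hδ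
  obtain ⟨t, ht⟩ := eventually_atTop.1 (eventually_all.2 fun i => eventually_all.2 (hω n i))
  exact ⟨t, fun s hs i j hE hclose => (ht s hs i j hE hclose).trans hn.le⟩

/-- Corollary 3 of the paper. If `inf_{t ≥ 0} μ(t) > 0`, then almost
surely, for every `δ > 0` there is a time `t` such that for all `s ≥ t` every edge of the
profile `E(s) ∩ 𝓔(s)` has length at most `δ`. -/
theorem deffuant_profile_edges_eventually_short
    {d : ℕ} (hd : 1 ≤ d) {V : Type*} [Fintype V] (hV : 2 ≤ Fintype.card V)
    {Ω : Type*} [MeasurableSpace Ω] (P : Measure Ω) [IsProbabilityMeasure P]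
    (e : ℕ → Ω → Sym2 V)
    (hmeas : ∀ t, @Measurable Ω (Sym2 V) _ ⊤ (e t))
    (hindep : iIndepFun (m := fun _ : ℕ => (⊤ : MeasurableSpace (Sym2 V))) e P)
    (hunif : ∀ t, ∀ p : Sym2 V, ¬ p.IsDiag →
      P {ω | e t ω = p} = ((Nat.card {q : Sym2 V // ¬ q.IsDiag} : ℝ≥0∞))⁻¹)
    (ε : ℝ) (hε : 0 < ε)
    (μ : ℕ → ℝ) (hμ : ∀ t, μ t ∈ Set.Icc (0 : ℝ) (1 / 2))
    (hinf : 0 < ⨅ t, μ t)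
    (E : ℕ → Set (Sym2 V))
    (x0 : V → EuclideanSpace ℝ (Fin d)) :
    ∀ᵐ ω ∂P, ∀ δ : ℝ, 0 < δ → ∃ t : ℕ, ∀ s, t ≤ s → ∀ i j : V, s(i, j) ∈ E s →
      ‖deffuantTraj ε μ E (fun u => e u ω) x0 s i
          - deffuantTraj ε μ E (fun u => e u ω) x0 s j‖ ≤ ε →
      ‖deffuantTraj ε μ E (fun u => e u ω) x0 s i
          - deffuantTraj ε μ E (fun u => e u ω) x0 s j‖ ≤ δ :=
  deffuant_profile_edges_eventually_short_general P e hmeas hindep hunif ε μ hμ hinf E x0
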